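/- Let Y, C be real random variables and X a random vector in ℝ^d such that C is independent of the pair (X, Y). Let G(t) = P(C > t) be continuous and suppose G(Y) > 0 almost surely. Let ψ be a bounded measurable function. Define Z = min(Y, C), δ = 1_{Y ≤ C}, and Ψ(Y, C) = δ ψ(Z) / G(Z). Then E[Ψ(Y, C) | X] = E[ψ(Y) | X] almost surely. -/

import Mathlib

open MeasureTheory ProbabilityTheory

theorem stmt_2 {Ω : Type*} [m0 : MeasurableSpace Ω] (μ : Measure Ω) [IsProbabilityMeasure μ]
    {d : ℕ} (Y C : Ω → ℝ) (X : Ω → Fin d → ℝ)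
    (hY : Measurable Y) (hC : Measurable C) (hX : Measurable X)
    (hindep : IndepFun C (fun ω => (X ω, Y ω)) μ)
    (G : ℝ → ℝ) (hGdef : ∀ t, G t = (μ {ω | t < C ω}).toReal)
    (hGcont : Continuous G)
    (hGY : ∀ᵐ ω ∂μ, 0 < G (Y ω))
    (ψ : ℝ → ℝ) (hψ : Measurable ψ) (M : ℝ) (hψM : ∀ y, |ψ y| ≤ M) :
    μ[fun ω => (if Y ω ≤ C ω then (1 : ℝ) else 0) * ψ (min (Y ω) (C ω)) / G (min (Y ω) (C ω))
        | MeasurableSpace.comap X inferInstance]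
      =ᵐ[μ] μ[fun ω => ψ (Y ω) | MeasurableSpace.comap X inferInstance] := by
  classical
  have hm : MeasurableSpace.comap X inferInstance ≤ m0 := measurable_iff_comap_le.mp hX
  set W : Ω → (Fin d → ℝ) × ℝ := fun ω => (X ω, Y ω) with hW_def
  have hW : Measurable W := hX.prodMk hY
  set ν : Measure ((Fin d → ℝ) × ℝ) := μ.map W with hν_def
  set κ : Measure ℝ := μ.map C with hκ_def
  haveI : IsProbabilityMeasure ν := Measure.isProbabilityMeasure_map hW.aemeasurable
  haveI : IsProbabilityMeasure κ := Measure.isProbabilityMeasure_map hC.aemeasurable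
  have hGmeas : Measurable G := hGcont.measurable
  have hG0 : ∀ t, 0 ≤ G t := fun t => by rw [hGdef]; exact ENNReal.toReal_nonneg
  have hGofReal : ∀ t, μ {ω | t < C ω} = ENNReal.ofReal (G t) := by
    intro t
    rw [hGdef]
    exact (ENNReal.ofReal_toReal (measure_ne_top μ _)).symm
  -- closed version, using continuity of G
  have hclosed : ∀ t, μ {ω | t ≤ C ω} = ENNReal.ofReal (G t) := by
    intro t
    refine le_antisymm ?_ ?_
    · have htend : Filter.Tendsto (fun s => ENNReal.ofReal (G s)) (nhdsWithin t (Set.Iio t))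
          (nhds (ENNReal.ofReal (G t))) :=
        (ENNReal.continuous_ofReal.tendsto _).comp ((hGcont.tendsto t).mono_left nhdsWithin_le_nhds)
      refine ge_of_tendsto htend ?_
      filter_upwards [eventually_mem_nhdsWithin] with s hs
      rw [← hGofReal s]
      exact measure_mono fun ω (hω : t ≤ C ω) => show s < C ω from lt_of_lt_of_le hs hω
    · rw [← hGofReal t]
      exact measure_mono fun ω (hω : t < C ω) => show t ≤ C ω from le_of_lt hω
  have hκIci : ∀ t : ℝ, κ (Set.Ici t) = ENNReal.ofReal (G t) := by
    intro t
    rw [hκ_def, Measure.map_apply hC measurableSet_Ici]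
    exact hclosed t
  have hmap : μ.map (fun ω => (W ω, C ω)) = ν.prod κ :=
    (indepFun_iff_map_prod_eq_prod_map_map hW.aemeasurable hC.aemeasurable).mp hindep.symm
  have hGν : ∀ᵐ w ∂ν, 0 < G w.2 := by
    rw [hν_def]
    exact (ae_map_iff hW.aemeasurable
      (measurableSet_lt measurable_const (hGmeas.comp measurable_snd))).mpr hGY
  -- key lintegral identity on the product measure
  have hkey : ∀ f : (Fin d → ℝ) × ℝ → ENNReal, Measurable f →
      ∫⁻ p, (if p.1.2 ≤ p.2 then f p.1 else 0) ∂(ν.prod κ)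
        = ∫⁻ w, f w * ENNReal.ofReal (G w.2) ∂ν := by
    intro f hf
    have hmeas : Measurable fun p : ((Fin d → ℝ) × ℝ) × ℝ =>
        (if p.1.2 ≤ p.2 then f p.1 else 0) :=
      Measurable.ite (measurableSet_le measurable_fst.snd measurable_snd)
        (hf.comp measurable_fst) measurable_const
    rw [lintegral_prod _ hmeas.aemeasurable]
    refine lintegral_congr fun w => ?_
    have h1 : ∀ c : ℝ, (if w.2 ≤ c then f w else 0)
        = Set.indicator (Set.Ici w.2) (fun _ => f w) c := by
      intro c
      rw [Set.indicator_apply]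
      rfl
    simp_rw [h1]
    rw [lintegral_indicator measurableSet_Ici, setLIntegral_const, hκIci]
  -- the simplified form of the IPCW transform
  set F : Ω → ℝ := fun ω => if Y ω ≤ C ω then ψ (Y ω) / G (Y ω) else 0 with hF_def
  have hFeq : (fun ω => (if Y ω ≤ C ω then (1 : ℝ) else 0) * ψ (min (Y ω) (C ω))
      / G (min (Y ω) (C ω))) = F := by
    funext ω
    by_cases h : Y ω ≤ C ω
    · simp [hF_def, h, min_eq_left h]
    · simp [hF_def, h]
  have hFmeas : Measurable F :=
    Measurable.ite (measurableSet_le hY hC)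
      ((hψ.comp hY).div (hGmeas.comp hY)) measurable_const
  -- integrability of F
  have hFint : Integrable F μ := by
    refine ⟨hFmeas.aestronglyMeasurable, ?_⟩
    rw [hasFiniteIntegral_def]
    have h1 : ∀ ω, (‖F ω‖₊ : ENNReal)
        = (if Y ω ≤ C ω then (fun w : (Fin d → ℝ) × ℝ =>
            (‖ψ w.2 / G w.2‖₊ : ENNReal)) (W ω) else 0) := by
      intro ω
      by_cases h : Y ω ≤ C ω <;> simp [hF_def, h, hW_def]
    have hfm : Measurable fun w : (Fin d → ℝ) × ℝ => (‖ψ w.2 / G w.2‖₊ : ENNReal) :=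
      ((hψ.comp measurable_snd).div (hGmeas.comp measurable_snd)).nnnorm.coe_nnreal_ennreal
    calc ∫⁻ ω, (‖F ω‖₊ : ENNReal) ∂μ
        = ∫⁻ ω, (fun p : ((Fin d → ℝ) × ℝ) × ℝ =>
            (if p.1.2 ≤ p.2 then (‖ψ p.1.2 / G p.1.2‖₊ : ENNReal) else 0)) (W ω, C ω) ∂μ := by
          exact lintegral_congr h1
      _ = ∫⁻ p, (if p.1.2 ≤ p.2 then (‖ψ p.1.2 / G p.1.2‖₊ : ENNReal) else 0)
            ∂(μ.map (fun ω => (W ω, C ω))) :=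
          (lintegral_map (Measurable.ite (measurableSet_le measurable_fst.snd measurable_snd)
            (hfm.comp measurable_fst) measurable_const) (hW.prodMk hC)).symm
      _ = ∫⁻ w, (‖ψ w.2 / G w.2‖₊ : ENNReal) * ENNReal.ofReal (G w.2) ∂ν := by
          rw [hmap]; exact hkey _ hfm
      _ ≤ ∫⁻ _, ENNReal.ofReal M ∂ν := by
          refine lintegral_mono_ae ?_
          filter_upwards [hGν] with w hw
          rw [← enorm_eq_nnnorm, Real.enorm_eq_ofReal_abs, ← ENNReal.ofReal_mul (abs_nonneg _),
            abs_div, abs_of_pos hw, div_mul_cancel₀ _ (ne_of_gt hw)]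
          exact ENNReal.ofReal_le_ofReal (hψM _)
      _ < ⊤ := by simp [lintegral_const]
  have hψY : Integrable (fun ω => ψ (Y ω)) μ := by
    refine Integrable.mono' (integrable_const M) ((hψ.comp hY).aestronglyMeasurable) ?_
    filter_upwards with ω
    rw [Real.norm_eq_abs]
    exact hψM _
  -- set integral equality
  have hset : ∀ s : Set Ω, MeasurableSet[MeasurableSpace.comap X inferInstance] s →
      ∫ ω in s, F ω ∂μ = ∫ ω in s, ψ (Y ω) ∂μ := by
    rintro s ⟨B, hB, rfl⟩
    set φ : (Fin d → ℝ) × ℝ → ℝ := fun w => if w.1 ∈ B then ψ w.2 / G w.2 else 0 with hφ_def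
    have hφmeas : Measurable φ :=
      Measurable.ite (measurable_fst hB)
        ((hψ.comp measurable_snd).div (hGmeas.comp measurable_snd)) measurable_const
    set k : ((Fin d → ℝ) × ℝ) × ℝ → ℝ := fun p => if p.1.2 ≤ p.2 then φ p.1 else 0 with hk_def
    have hkmeas : Measurable k :=
      Measurable.ite (measurableSet_le measurable_fst.snd measurable_snd)
        (hφmeas.comp measurable_fst) measurable_const
    -- integrability of k on the product measure
    have hkint : Integrable k (ν.prod κ) := by
      refine ⟨hkmeas.aestronglyMeasurable, ?_⟩
      rw [hasFiniteIntegral_def]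
      have h1 : ∀ p : ((Fin d → ℝ) × ℝ) × ℝ, (‖k p‖₊ : ENNReal)
          = (if p.1.2 ≤ p.2 then (fun w => (‖φ w‖₊ : ENNReal)) p.1 else 0) := by
        intro p
        by_cases h : p.1.2 ≤ p.2 <;> simp [hk_def, h]
      calc ∫⁻ p, (‖k p‖₊ : ENNReal) ∂(ν.prod κ)
          = ∫⁻ p, (if p.1.2 ≤ p.2 then (fun w => (‖φ w‖₊ : ENNReal)) p.1 else 0) ∂(ν.prod κ) :=
            lintegral_congr h1
        _ = ∫⁻ w, (‖φ w‖₊ : ENNReal) * ENNReal.ofReal (G w.2) ∂ν :=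
            hkey _ hφmeas.nnnorm.coe_nnreal_ennreal
        _ ≤ ∫⁻ _, ENNReal.ofReal M ∂ν := by
            refine lintegral_mono_ae ?_
            filter_upwards [hGν] with w hw
            rw [← enorm_eq_nnnorm, Real.enorm_eq_ofReal_abs, ← ENNReal.ofReal_mul (abs_nonneg _)]
            refine ENNReal.ofReal_le_ofReal ?_
            by_cases hwB : w.1 ∈ B
            · rw [hφ_def]
              simp only [hwB, if_true]
              rw [abs_div, abs_of_pos hw, div_mul_cancel₀ _ (ne_of_gt hw)]
              exact hψM _
            · rw [hφ_def]
              simp only [hwB, if_false, abs_zero, zero_mul]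
              exact le_trans (abs_nonneg (ψ w.2)) (hψM w.2)
        _ < ⊤ := by simp [lintegral_const]
    have hXB : MeasurableSet (X ⁻¹' B) := hX hB
    have hLHS : ∫ ω in X ⁻¹' B, F ω ∂μ = ∫ w, G w.2 * φ w ∂ν := by
      have hind : ∀ ω, Set.indicator (X ⁻¹' B) F ω = k (W ω, C ω) := by
        intro ω
        rw [Set.indicator_apply]
        by_cases h1 : X ω ∈ B <;> by_cases h2 : Y ω ≤ C ω <;>
          simp [hF_def, hk_def, hφ_def, h1, h2, hW_def]
      calc ∫ ω in X ⁻¹' B, F ω ∂μ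
          = ∫ ω, Set.indicator (X ⁻¹' B) F ω ∂μ := (integral_indicator hXB).symm
        _ = ∫ ω, k (W ω, C ω) ∂μ := by exact integral_congr_ae (Filter.Eventually.of_forall hind)
        _ = ∫ p, k p ∂(μ.map (fun ω => (W ω, C ω))) :=
            (integral_map (hW.prodMk hC).aemeasurable hkmeas.aestronglyMeasurable).symm
        _ = ∫ p, k p ∂(ν.prod κ) := by rw [hmap]
        _ = ∫ w, ∫ c, k (w, c) ∂κ ∂ν := integral_prod k hkint
        _ = ∫ w, G w.2 * φ w ∂ν := by
            refine integral_congr_ae (Filter.Eventually.of_forall fun w => ?_)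
            have h2 : ∀ c : ℝ, k (w, c) = Set.indicator (Set.Ici w.2) (fun _ => φ w) c := by
              intro c
              rw [Set.indicator_apply]
              rfl
            simp_rw [h2]
            rw [integral_indicator measurableSet_Ici, setIntegral_const, measureReal_def, hκIci,
              ENNReal.toReal_ofReal (hG0 _), smul_eq_mul]
    have hRHS : ∫ ω in X ⁻¹' B, ψ (Y ω) ∂μ = ∫ w, (if w.1 ∈ B then ψ w.2 else 0) ∂ν := by
      have hmeas2 : Measurable fun w : (Fin d → ℝ) × ℝ => (if w.1 ∈ B then ψ w.2 else 0) :=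
        Measurable.ite (measurable_fst hB) (hψ.comp measurable_snd) measurable_const
      calc ∫ ω in X ⁻¹' B, ψ (Y ω) ∂μ
          = ∫ ω, Set.indicator (X ⁻¹' B) (fun ω => ψ (Y ω)) ω ∂μ :=
            (integral_indicator hXB).symm
        _ = ∫ ω, (fun w : (Fin d → ℝ) × ℝ => (if w.1 ∈ B then ψ w.2 else 0)) (W ω) ∂μ := by
            refine integral_congr_ae (Filter.Eventually.of_forall fun ω => ?_)
            rw [Set.indicator_apply]
            rfl
        _ = ∫ w, (if w.1 ∈ B then ψ w.2 else 0) ∂ν :=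
            (integral_map hW.aemeasurable hmeas2.aestronglyMeasurable).symm
    rw [hLHS, hRHS]
    refine integral_congr_ae ?_
    filter_upwards [hGν] with w hw
    by_cases hwB : w.1 ∈ B
    · simp only [hφ_def, hwB, if_true]
      rw [mul_div_cancel₀ _ (ne_of_gt hw)]
    · simp [hφ_def, hwB]
  -- conclude
  rw [hFeq]
  refine ae_eq_condExp_of_forall_setIntegral_eq hm hψY
    (fun s _ _ => integrable_condExp.integrableOn) (fun s hs _ => ?_)
    (StronglyMeasurable.aestronglyMeasurable stronglyMeasurable_condExp)
  rw [setIntegral_condExp hm hFint hs]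
  exact hset s hs
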